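/- Let F be a non-expansive operator on a real Hilbert space with Fix(F) ≠ ∅, and let the Halpern iteration be u^{k+1} = (1/(k+2)) u⁰ + (1 - 1/(k+2)) F(u^k) for k ≥ 0 starting from u⁰. Then for all k ≥ 0 and any u* ∈ Fix(F), the fixed-point residual satisfies ‖u^k - F(u^k)‖ ≤ 2‖u⁰ - u*‖/(k + 1). -/

import Mathlib

/-!
Write `r_k = u^k - F(u^k)`. Since `F` is non-expansive, `I - F` is `1/2`-cocoercive:
`‖(x - F x) - (y - F y)‖² ≤ 2 ⟪(x - F x) - (y - F y), x - y⟫`. Applied to consecutive iterates,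
this shows that the energy `V_k = k(k+1)/2 ‖r_k‖² + (k+1) ⟪r_k, u^k - u⁰⟫` is non-increasing,
so `V_k ≤ V_0 = 0`. Splitting `u^k - u⁰ = (u^k - u*) - (u⁰ - u*)`, cocoercivity at `(u^k, u*)`
gives `⟪r_k, u^k - u*⟫ ≥ ‖r_k‖² / 2` and Cauchy–Schwarz bounds the rest, whence
`(k+1) ‖r_k‖² ≤ 2 ‖r_k‖ ‖u⁰ - u*‖`.
-/

open scoped RealInnerProductSpace

section Nonexpansive

variable {H : Type*} [NormedAddCommGroup H] [InnerProductSpace ℝ H]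

theorem norm_sq_le_two_inner_of_norm_sub_le {x y : H} (h : ‖x - y‖ ≤ ‖x‖) :
    ‖y‖ ^ 2 ≤ 2 * ⟪y, x⟫ := by
  have hsq : ‖x - y‖ ^ 2 ≤ ‖x‖ ^ 2 := pow_le_pow_left₀ (norm_nonneg _) h 2
  rw [norm_sub_sq_real, real_inner_comm] at hsq
  linarith

theorem norm_residual_sub_sq_le_two_inner {F : H → H} (hF : ∀ x y : H, ‖F x - F y‖ ≤ ‖x - y‖)
    (x y : H) : ‖(x - F x) - (y - F y)‖ ^ 2 ≤ 2 * ⟪(x - F x) - (y - F y), x - y⟫ :=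
  norm_sq_le_two_inner_of_norm_sub_le <| by
    rw [show x - y - (x - F x - (y - F y)) = F x - F y by abel]
    exact hF x y

end Nonexpansive

theorem halpern_smul_succ {E : Type*} [AddCommGroup E] [Module ℝ E] {F : E → E} {u : ℕ → E}
    (hrec : ∀ k : ℕ, u (k + 1) = (1 / (k + 2 : ℝ)) • u 0 + (1 - 1 / (k + 2 : ℝ)) • F (u k))
    (k : ℕ) : ((k : ℝ) + 2) • u (k + 1) = u 0 + ((k : ℝ) + 1) • F (u k) := by
  have hk : (k : ℝ) + 2 ≠ 0 := by positivity
  rw [hrec k, smul_add, smul_smul, smul_smul, mul_one_div_cancel hk, one_smul]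
  congr 1
  rw [mul_sub, mul_one_div_cancel hk]
  ring_nf

section Halpern

variable {H : Type*} [NormedAddCommGroup H] [InnerProductSpace ℝ H]

noncomputable def halpernEnergy (F : H → H) (u : ℕ → H) (k : ℕ) : ℝ :=
  k * (k + 1) / 2 * ‖u k - F (u k)‖ ^ 2 + (k + 1) * ⟪u k - F (u k), u k - u 0⟫

variable {F : H → H} {u : ℕ → H}

theorem halpernEnergy_succ_le (hF : ∀ x y : H, ‖F x - F y‖ ≤ ‖x - y‖)
    (hrec : ∀ k : ℕ, u (k + 1) = (1 / (k + 2 : ℝ)) • u 0 + (1 - 1 / (k + 2 : ℝ)) • F (u k))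
    (k : ℕ) : halpernEnergy F u (k + 1) ≤ halpernEnergy F u k := by
  have hsucc := halpern_smul_succ hrec k
  have hcoc := norm_residual_sub_sq_le_two_inner hF (u k) (u (k + 1))
  simp only [halpernEnergy]
  push_cast
  set r := u k - F (u k)
  set q := u (k + 1) - F (u (k + 1))
  set s := u k - u 0
  have hinit : ((k : ℝ) + 2) • (u (k + 1) - u 0) = ((k : ℝ) + 1) • (s - r) := by
    rw [smul_sub, hsucc]; module
  have hstep : ((k : ℝ) + 2) • (u k - u (k + 1)) = ((k : ℝ) + 1) • r + s := by
    rw [smul_sub, hsucc]; module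
  replace hcoc : ((k : ℝ) + 2) * ‖r - q‖ ^ 2 ≤ 2 * ⟪r - q, ((k : ℝ) + 1) • r + s⟫ := by
    rw [← hstep, real_inner_smul_right, mul_left_comm]
    exact mul_le_mul_of_nonneg_left hcoc (by positivity)
  have hlin : ((k : ℝ) + 1 + 1) * ⟪q, u (k + 1) - u 0⟫ = ((k : ℝ) + 1) * ⟪q, s - r⟫ := by
    rw [add_assoc, one_add_one_eq_two, ← real_inner_smul_right, hinit, real_inner_smul_right]
  rw [hlin]
  clear_value r q s
  rw [norm_sub_sq_real] at hcoc
  simp only [inner_add_right, inner_sub_right, inner_sub_left, real_inner_smul_right,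
    real_inner_self_eq_norm_sq, real_inner_comm r q] at hcoc ⊢
  linear_combination ((k : ℝ) + 1) / 2 * hcoc

theorem halpernEnergy_nonpos (hF : ∀ x y : H, ‖F x - F y‖ ≤ ‖x - y‖)
    (hrec : ∀ k : ℕ, u (k + 1) = (1 / (k + 2 : ℝ)) • u 0 + (1 - 1 / (k + 2 : ℝ)) • F (u k))
    (k : ℕ) : halpernEnergy F u k ≤ 0 := by
  induction k with
  | zero => simp [halpernEnergy]
  | succ k ih => exact (halpernEnergy_succ_le hF hrec k).trans ih

end Halpern

theorem halpern_residual_rate_general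
    {H : Type*} [NormedAddCommGroup H] [InnerProductSpace ℝ H]
    (F : H → H) (hF : ∀ x y : H, ‖F x - F y‖ ≤ ‖x - y‖)
    (u : ℕ → H)
    (hrec : ∀ k : ℕ,
      u (k + 1) = (1 / (k + 2 : ℝ)) • u 0 + (1 - 1 / (k + 2 : ℝ)) • F (u k))
    (ustar : H) (hstar : F ustar = ustar) :
    ∀ k : ℕ, ‖u k - F (u k)‖ ≤ 2 * ‖u 0 - ustar‖ / (k + 1 : ℝ) := by
  intro k
  have henergy := halpernEnergy_nonpos hF hrec k
  have hcoc := norm_residual_sub_sq_le_two_inner hF (u k) ustar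
  rw [hstar, sub_self, sub_zero] at hcoc
  set r := u k - F (u k)
  have hsplit : ⟪r, u k - u 0⟫ = ⟪r, u k - ustar⟫ - ⟪r, u 0 - ustar⟫ := by
    rw [← inner_sub_right, sub_sub_sub_cancel_right]
  have hcs : ⟪r, u 0 - ustar⟫ ≤ ‖r‖ * ‖u 0 - ustar‖ := real_inner_le_norm _ _
  rw [halpernEnergy, hsplit] at henergy
  have hquad : ‖r‖ * (‖r‖ * (k + 1)) ≤ ‖r‖ * (2 * ‖u 0 - ustar‖) := by
    nlinarith [norm_nonneg r]
  rw [le_div_iff₀ (by positivity)]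
  rcases (norm_nonneg r).eq_or_lt with hzero | hpos
  · rw [← hzero, zero_mul]; positivity
  · exact le_of_mul_le_mul_left hquad hpos

/-- Halpern iteration with stepsizes `1/(k+2)`: the fixed-point residual satisfies
`‖u^k - F(u^k)‖ ≤ 2 ‖u⁰ - u*‖ / (k+1)` for every fixed point `u*` of the
non-expansive operator `F`. -/
theorem halpern_residual_rate
    {H : Type*} [NormedAddCommGroup H] [InnerProductSpace ℝ H] [CompleteSpace H]
    (F : H → H) (hF : ∀ x y : H, ‖F x - F y‖ ≤ ‖x - y‖)
    (u : ℕ → H)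
    (hrec : ∀ k : ℕ,
      u (k + 1) = (1 / (k + 2 : ℝ)) • u 0 + (1 - 1 / (k + 2 : ℝ)) • F (u k))
    (ustar : H) (hstar : F ustar = ustar) :
    ∀ k : ℕ, ‖u k - F (u k)‖ ≤ 2 * ‖u 0 - ustar‖ / (k + 1 : ℝ) :=
  halpern_residual_rate_general F hF u hrec ustar hstar
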